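/- For ℓ ∈ ℕ define a_ℓ(z) := (1/(2^ℓ ℓ!)) ∫₀^∞ s^{2ℓ+1} e^{−s²/2} / √(s² + z²) ds and b_ℓ(z) := (1/(2^ℓ ℓ!)) ∫₀^∞ s^{2ℓ+1} e^{−s²/2} √(s² + z²) ds. Then for every z ∈ ℝ and every ℓ, a_ℓ(z) ≥ a_{ℓ+1}(z) and b_ℓ(z) ≤ b_{ℓ+1}(z). -/

import Mathlib

open MeasureTheory

/-- `a_ℓ(z) = (2^ℓ ℓ!)⁻¹ ∫₀^∞ s^{2ℓ+1} e^{−s²/2}/√(s²+z²) ds`. -/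
noncomputable def aL (ℓ : ℕ) (z : ℝ) : ℝ :=
  (1 / (2 ^ ℓ * (Nat.factorial ℓ : ℝ))) *
    ∫ s in Set.Ioi (0:ℝ), s ^ (2 * ℓ + 1) * Real.exp (-s ^ 2 / 2) / Real.sqrt (s ^ 2 + z ^ 2)

/-- `b_ℓ(z) = (2^ℓ ℓ!)⁻¹ ∫₀^∞ s^{2ℓ+1} e^{−s²/2} √(s²+z²) ds`. -/
noncomputable def bL (ℓ : ℕ) (z : ℝ) : ℝ :=
  (1 / (2 ^ ℓ * (Nat.factorial ℓ : ℝ))) *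
    ∫ s in Set.Ioi (0:ℝ), s ^ (2 * ℓ + 1) * Real.exp (-s ^ 2 / 2) * Real.sqrt (s ^ 2 + z ^ 2)

/-!
With `k = 2ℓ + 1` the two weights are `s^k e^{-s²/2}` and `s^(k+2) e^{-s²/2} / (k+1)`, and the
Gaussian moment recursion `∫₀^∞ s^(k+2) e^{-s²/2} = (k+1) ∫₀^∞ s^k e^{-s²/2}` (integration by parts)
says they have the same mass. So `w(s) = s^k e^{-s²/2} (s² - (k+1))` has integral zero and changes
sign exactly at `s₀ = √(k+1)`. For `f` monotone on `(0, ∞)` the product `w (f - f s₀)` is pointwise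
nonnegative, hence `∫ w f = ∫ w (f - f s₀) ≥ 0`. Apply this to the decreasing `1/√(s²+z²)` and the
increasing `√(s²+z²)`.
-/

open Set Real Filter

lemma integrableOn_pow_mul_exp_neg_sq_div_two (k : ℕ) :
    IntegrableOn (fun s : ℝ => s ^ k * exp (-s ^ 2 / 2)) (Ioi 0) := by
  have h := integrableOn_rpow_mul_exp_neg_mul_sq one_half_pos
    (show (-1 : ℝ) < k by linarith [k.cast_nonneg (α := ℝ)])
  refine h.congr_fun (fun s _ => ?_) measurableSet_Ioi
  simp only [rpow_natCast]
  ring_nf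

lemma tendsto_pow_mul_exp_neg_sq_div_two_atTop (k : ℕ) :
    Tendsto (fun s : ℝ => s ^ k * exp (-s ^ 2 / 2)) atTop (nhds 0) := by
  have h := (rpow_mul_exp_neg_mul_sq_isLittleO_exp_neg one_half_pos (k : ℝ)).tendsto_zero_of_tendsto
    (tendsto_exp_atBot.comp <| tendsto_id.const_mul_atTop_of_neg (neg_lt_zero.mpr one_half_pos))
  refine h.congr fun s => ?_
  simp only [rpow_natCast]
  ring_nf

lemma integral_pow_add_two_mul_exp_neg_sq_div_two (k : ℕ) :
    ∫ s in Ioi (0 : ℝ), s ^ (k + 2) * exp (-s ^ 2 / 2)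
      = (k + 1) * ∫ s in Ioi (0 : ℝ), s ^ k * exp (-s ^ 2 / 2) := by
  have hderiv (s : ℝ) : HasDerivAt (fun s => -(s ^ (k + 1) * exp (-s ^ 2 / 2)))
      (s ^ (k + 2) * exp (-s ^ 2 / 2) - (k + 1) * (s ^ k * exp (-s ^ 2 / 2))) s := by
    have hexp : HasDerivAt (fun x : ℝ => exp (-x ^ 2 / 2)) (exp (-s ^ 2 / 2) * (-(2 * s) / 2)) s := by
      simpa using ((hasDerivAt_pow 2 s).neg.div_const 2).exp
    refine ((hasDerivAt_pow (k + 1) s).mul hexp).neg.congr_deriv ?_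
    push_cast
    ring
  have key := integral_Ioi_of_hasDerivAt_of_tendsto' (fun s _ => hderiv s)
    ((integrableOn_pow_mul_exp_neg_sq_div_two (k + 2)).sub
      ((integrableOn_pow_mul_exp_neg_sq_div_two k).const_mul _))
    (by simpa using (tendsto_pow_mul_exp_neg_sq_div_two_atTop (k + 1)).neg)
  rw [integral_sub (integrableOn_pow_mul_exp_neg_sq_div_two (k + 2))
    ((integrableOn_pow_mul_exp_neg_sq_div_two k).const_mul _), integral_const_mul] at key
  rw [zero_pow k.succ_ne_zero, zero_mul, neg_zero, sub_zero] at key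
  linarith

lemma MonotoneOn.mul_integral_pow_mul_exp_le {f : ℝ → ℝ} (hf : MonotoneOn f (Ioi 0)) (k : ℕ)
    (hk : IntegrableOn (fun s => s ^ k * exp (-s ^ 2 / 2) * f s) (Ioi 0))
    (hk2 : IntegrableOn (fun s => s ^ (k + 2) * exp (-s ^ 2 / 2) * f s) (Ioi 0)) :
    (k + 1) * ∫ s in Ioi (0 : ℝ), s ^ k * exp (-s ^ 2 / 2) * f s
      ≤ ∫ s in Ioi (0 : ℝ), s ^ (k + 2) * exp (-s ^ 2 / 2) * f s := by
  set w : ℝ → ℝ := fun s => s ^ (k + 2) * exp (-s ^ 2 / 2) - (k + 1) * (s ^ k * exp (-s ^ 2 / 2))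
  have hw_int : IntegrableOn w (Ioi 0) :=
    (integrableOn_pow_mul_exp_neg_sq_div_two (k + 2)).sub
      ((integrableOn_pow_mul_exp_neg_sq_div_two k).const_mul _)
  have hw_zero : ∫ s in Ioi (0 : ℝ), w s = 0 := by
    rw [integral_sub (integrableOn_pow_mul_exp_neg_sq_div_two (k + 2))
      ((integrableOn_pow_mul_exp_neg_sq_div_two k).const_mul _), integral_const_mul,
      integral_pow_add_two_mul_exp_neg_sq_div_two, sub_self]
  set s₀ := √((k : ℝ) + 1)
  have hs₀ : 0 < s₀ := sqrt_pos.2 (by positivity)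
  have hsign : ∀ s ∈ Ioi (0 : ℝ), 0 ≤ w s * (f s - f s₀) := by
    intro s hs
    have hw : w s = s ^ k * exp (-s ^ 2 / 2) * (s ^ 2 - s₀ ^ 2) := by
      simp only [w, s₀, sq_sqrt (by positivity : (0:ℝ) ≤ k + 1)]
      ring
    have hpos : 0 < s ^ k * exp (-s ^ 2 / 2) := by have := hs.out; positivity
    rw [hw, mul_assoc]
    refine mul_nonneg hpos.le ?_
    rcases le_total s₀ s with h | h
    · exact mul_nonneg (by nlinarith) (sub_nonneg.2 (hf hs₀ hs h))
    · exact mul_nonneg_of_nonpos_of_nonpos (by nlinarith [hs.out]) (sub_nonpos.2 (hf hs hs₀ h))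
  have key : 0 ≤ ∫ s in Ioi (0 : ℝ),
      (s ^ (k + 2) * exp (-s ^ 2 / 2) * f s - (k + 1) * (s ^ k * exp (-s ^ 2 / 2) * f s))
        - f s₀ * w s := by
    refine setIntegral_nonneg measurableSet_Ioi fun s hs => (hsign s hs).trans_eq ?_
    simp only [w]
    ring
  have hdiff : IntegrableOn (fun s =>
      s ^ (k + 2) * exp (-s ^ 2 / 2) * f s - (k + 1) * (s ^ k * exp (-s ^ 2 / 2) * f s)) (Ioi 0) :=
    hk2.sub (hk.const_mul _)
  rw [integral_sub hdiff (hw_int.const_mul _),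
    integral_sub hk2 (hk.const_mul _), integral_const_mul, integral_const_mul, hw_zero] at key
  linarith

lemma AntitoneOn.integral_pow_mul_exp_le_mul {f : ℝ → ℝ} (hf : AntitoneOn f (Ioi 0)) (k : ℕ)
    (hk : IntegrableOn (fun s => s ^ k * exp (-s ^ 2 / 2) * f s) (Ioi 0))
    (hk2 : IntegrableOn (fun s => s ^ (k + 2) * exp (-s ^ 2 / 2) * f s) (Ioi 0)) :
    ∫ s in Ioi (0 : ℝ), s ^ (k + 2) * exp (-s ^ 2 / 2) * f s
      ≤ (k + 1) * ∫ s in Ioi (0 : ℝ), s ^ k * exp (-s ^ 2 / 2) * f s := by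
  have := hf.neg.mul_integral_pow_mul_exp_le k (by simpa only [Pi.neg_def, mul_neg] using hk.neg)
    (by simpa only [Pi.neg_def, mul_neg] using hk2.neg)
  simp only [mul_neg, integral_neg] at this
  linarith

lemma le_sqrt_sq_add_sq (s z : ℝ) : s ≤ √(s ^ 2 + z ^ 2) :=
  le_sqrt_of_sq_le (by nlinarith [sq_nonneg z])

lemma sqrt_sq_add_sq_le {s : ℝ} (hs : 0 ≤ s) (z : ℝ) : √(s ^ 2 + z ^ 2) ≤ s + |z| :=
  sqrt_le_iff.2 ⟨by positivity, by nlinarith [sq_abs z, abs_nonneg z]⟩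

lemma monotoneOn_sqrt_sq_add_sq (z : ℝ) : MonotoneOn (fun s : ℝ => √(s ^ 2 + z ^ 2)) (Ioi 0) :=
  fun _ ha _ _ hab => sqrt_le_sqrt (by gcongr; exact ha.out.le)

lemma antitoneOn_inv_sqrt_sq_add_sq (z : ℝ) :
    AntitoneOn (fun s : ℝ => (√(s ^ 2 + z ^ 2))⁻¹) (Ioi 0) :=
  fun _ ha _ hb hab => inv_anti₀ ((le_sqrt_sq_add_sq _ z).trans_lt' ha.out)
    (monotoneOn_sqrt_sq_add_sq z ha hb hab)

lemma integrableOn_pow_succ_mul_exp_mul_inv_sqrt (z : ℝ) (k : ℕ) :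
    IntegrableOn (fun s => s ^ (k + 1) * exp (-s ^ 2 / 2) * (√(s ^ 2 + z ^ 2))⁻¹) (Ioi 0) := by
  refine (integrableOn_pow_mul_exp_neg_sq_div_two k).mono' (by fun_prop) ?_
  filter_upwards [ae_restrict_mem measurableSet_Ioi] with s (hs : 0 < s)
  rw [norm_of_nonneg (by positivity)]
  calc s ^ (k + 1) * exp (-s ^ 2 / 2) * (√(s ^ 2 + z ^ 2))⁻¹
      = s ^ k * exp (-s ^ 2 / 2) * (s * (√(s ^ 2 + z ^ 2))⁻¹) := by ring
    _ ≤ s ^ k * exp (-s ^ 2 / 2) * 1 := by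
        gcongr
        exact mul_inv_le_one_of_le₀ (le_sqrt_sq_add_sq s z) (sqrt_nonneg _)
    _ = s ^ k * exp (-s ^ 2 / 2) := mul_one _

lemma integrableOn_pow_mul_exp_mul_sqrt (z : ℝ) (k : ℕ) :
    IntegrableOn (fun s => s ^ k * exp (-s ^ 2 / 2) * √(s ^ 2 + z ^ 2)) (Ioi 0) := by
  refine ((integrableOn_pow_mul_exp_neg_sq_div_two (k + 1)).add
    ((integrableOn_pow_mul_exp_neg_sq_div_two k).const_mul |z|)).mono' (by fun_prop) ?_
  filter_upwards [ae_restrict_mem measurableSet_Ioi] with s (hs : 0 < s)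
  rw [norm_of_nonneg (by positivity), Pi.add_apply]
  calc s ^ k * exp (-s ^ 2 / 2) * √(s ^ 2 + z ^ 2)
      ≤ s ^ k * exp (-s ^ 2 / 2) * (s + |z|) := by
        gcongr
        exact sqrt_sq_add_sq_le hs.le z
    _ = _ := by ring

/-- For every `z` and every `ℓ`, `a_ℓ(z) ≥ a_{ℓ+1}(z)` and `b_ℓ(z) ≤ b_{ℓ+1}(z)`. -/
theorem aL_antitone_bL_monotone (z : ℝ) (ℓ : ℕ) :
    aL ℓ z ≥ aL (ℓ + 1) z ∧ bL ℓ z ≤ bL (ℓ + 1) z := by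
  have hN : (0 : ℝ) < 2 ^ ℓ * (Nat.factorial ℓ : ℝ) := by positivity
  have hN_succ : (2 : ℝ) ^ (ℓ + 1) * (Nat.factorial (ℓ + 1) : ℝ)
      = (((2 * ℓ + 1 : ℕ) : ℝ) + 1) * (2 ^ ℓ * (Nat.factorial ℓ : ℝ)) := by
    push_cast [Nat.factorial_succ, pow_succ]
    ring
  have hpow : 2 * (ℓ + 1) + 1 = 2 * ℓ + 1 + 2 := by ring
  have hA := (antitoneOn_inv_sqrt_sq_add_sq z).integral_pow_mul_exp_le_mul (2 * ℓ + 1)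
    (integrableOn_pow_succ_mul_exp_mul_inv_sqrt z (2 * ℓ))
    (integrableOn_pow_succ_mul_exp_mul_inv_sqrt z (2 * ℓ + 2))
  have hB := (monotoneOn_sqrt_sq_add_sq z).mul_integral_pow_mul_exp_le (2 * ℓ + 1)
    (integrableOn_pow_mul_exp_mul_sqrt z _) (integrableOn_pow_mul_exp_mul_sqrt z _)
  simp only [← div_eq_mul_inv] at hA
  rw [aL, aL, bL, bL, hpow, hN_succ, one_div_mul_eq_div, one_div_mul_eq_div, one_div_mul_eq_div,
    one_div_mul_eq_div]
  constructor
  · rw [ge_iff_le, div_le_div_iff₀ (by positivity) hN]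
    nlinarith [mul_le_mul_of_nonneg_right hA hN.le]
  · rw [div_le_div_iff₀ hN (by positivity)]
    nlinarith [mul_le_mul_of_nonneg_right hB hN.le]
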